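/- arXiv:0802.3165 — 5 statements merged into one kernel-verified Lean document; each statement's English description precedes it below -/
import Mathlib

section
/- Let F be a field and let θ0,θ1,θ2,θ0*,θ1*,θ2*,φ,ϕ ∈ F with θ0,θ1,θ2 pairwise distinct, θ0*,θ1*,θ2* pairwise distinct, and φ ≠ 0, ϕ ≠ 0. Define φ₁ = (ϕ-φ)/((θ0-θ2)(θ0*-θ2*)) - (θ0-θ1)(θ0*-θ1*) and φ₂ = (ϕ-φ)/((θ0-θ2)(θ0*-θ2*)) - (θ1-θ2)(θ1*-θ2*). Let A be the 4×4 matrix with rows (θ0,0,0,0), (1,θ1,0,0), (0,0,θ1,0), (0,1,φ₂,θ2) and A* the 4×4 matrix with rows (θ0*,φ₁,φ,0), (0,θ1*,0,0), (0,0,θ1*,1), (0,0,0,θ2*). Then (A* - θ1*·I)(A* - θ2*·I)(A - θ1·I)(A - θ0·I) applied to the standard basis vector e₀ equals φ·e₀. -/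
theorem stmt1 (F : Type*) [Field F]
    (θ0 θ1 θ2 θ0s θ1s θ2s φ ϕ : F)
    (h01 : θ0 ≠ θ1) (h02 : θ0 ≠ θ2) (h12 : θ1 ≠ θ2)
    (h01s : θ0s ≠ θ1s) (h02s : θ0s ≠ θ2s) (h12s : θ1s ≠ θ2s)
    (hφ : φ ≠ 0) (hϕ : ϕ ≠ 0)
    (φ₁ φ₂ : F)
    (hφ₁ : φ₁ = (ϕ - φ) / ((θ0 - θ2) * (θ0s - θ2s)) - (θ0 - θ1) * (θ0s - θ1s))
    (hφ₂ : φ₂ = (ϕ - φ) / ((θ0 - θ2) * (θ0s - θ2s)) - (θ1 - θ2) * (θ1s - θ2s))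
    (A As : Matrix (Fin 4) (Fin 4) F)
    (hA : A = !![θ0, 0, 0, 0; 1, θ1, 0, 0; 0, 0, θ1, 0; 0, 1, φ₂, θ2])
    (hAs : As = !![θ0s, φ₁, φ, 0; 0, θ1s, 0, 0; 0, 0, θ1s, 1; 0, 0, 0, θ2s]) :
    ((As - θ1s • 1) * (As - θ2s • 1) * (A - θ1 • 1) * (A - θ0 • 1)).mulVec
      ![1, 0, 0, 0] = φ • ![1, 0, 0, 0] := by
  subst hA hAs
  ext i
  fin_cases i <;>
    simp [Matrix.mulVec, Matrix.mul_apply, Fin.sum_univ_four, Matrix.sub_apply,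
      Matrix.smul_apply, Matrix.one_apply, dotProduct] <;> ring
end

section
/- Let F be a field and θ0,θ1,θ2,θ0*,θ1*,θ2*,φ,ϕ ∈ F with θ0,θ1,θ2 pairwise distinct, θ0*,θ1*,θ2* pairwise distinct, φ ≠ 0, ϕ ≠ 0, and φ ≠ φ₁·φ₂ where φ₁ = (ϕ-φ)/((θ0-θ2)(θ0*-θ2*)) - (θ0-θ1)(θ0*-θ1*) and φ₂ = (ϕ-φ)/((θ0-θ2)(θ0*-θ2*)) - (θ1-θ2)(θ1*-θ2*). Let A be the 4×4 matrix with rows (θ0,0,0,0), (1,θ1,0,0), (0,0,θ1,0), (0,1,φ₂,θ2) and A* the 4×4 matrix with rows (θ0*,φ₁,φ,0), (0,θ1*,0,0), (0,0,θ1*,1), (0,0,0,θ2*). Then there is no subspace W of F⁴ with A·W ⊆ W, A*·W ⊆ W, W ≠ 0, and W ≠ F⁴ (i.e., the pair (A, A*) acts irreducibly on F⁴). -/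
theorem stmt7 (F : Type*) [Field F]
    (θ0 θ1 θ2 θ0s θ1s θ2s φ ϕ : F)
    (h01 : θ0 ≠ θ1) (h02 : θ0 ≠ θ2) (h12 : θ1 ≠ θ2)
    (h01s : θ0s ≠ θ1s) (h02s : θ0s ≠ θ2s) (h12s : θ1s ≠ θ2s)
    (hφ : φ ≠ 0) (hϕ : ϕ ≠ 0)
    (φ₁ φ₂ : F)
    (hφ₁ : φ₁ = (ϕ - φ) / ((θ0 - θ2) * (θ0s - θ2s)) - (θ0 - θ1) * (θ0s - θ1s))
    (hφ₂ : φ₂ = (ϕ - φ) / ((θ0 - θ2) * (θ0s - θ2s)) - (θ1 - θ2) * (θ1s - θ2s))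
    (hne : φ ≠ φ₁ * φ₂)
    (A As : Matrix (Fin 4) (Fin 4) F)
    (hA : A = !![θ0, 0, 0, 0; 1, θ1, 0, 0; 0, 0, θ1, 0; 0, 1, φ₂, θ2])
    (hAs : As = !![θ0s, φ₁, φ, 0; 0, θ1s, 0, 0; 0, 0, θ1s, 1; 0, 0, 0, θ2s]) :
    ¬ ∃ W : Submodule F (Fin 4 → F),
        (∀ x ∈ W, A.mulVec x ∈ W) ∧ (∀ x ∈ W, As.mulVec x ∈ W) ∧
        W ≠ ⊥ ∧ W ≠ ⊤ := by
  rintro ⟨W, hAW, hAsW, hbot, htop⟩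
  have h02' : θ0 - θ2 ≠ 0 := sub_ne_zero.mpr h02
  have h02s' : θ0s - θ2s ≠ 0 := sub_ne_zero.mpr h02s
  -- explicit action of A and As on vectors
  have hAm : ∀ v : Fin 4 → F, A.mulVec v =
      ![θ0 * v 0, v 0 + θ1 * v 1, θ1 * v 2, v 1 + φ₂ * v 2 + θ2 * v 3] := by
    intro v
    funext i
    fin_cases i <;>
      simp [hA, Matrix.mulVec, dotProduct, Fin.sum_univ_four] <;> ring
  have hAsm : ∀ v : Fin 4 → F, As.mulVec v =
      ![θ0s * v 0 + φ₁ * v 1 + φ * v 2, θ1s * v 1, θ1s * v 2 + v 3, θ2s * v 3] := by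
    intro v
    funext i
    fin_cases i <;>
      simp [hAs, Matrix.mulVec, dotProduct, Fin.sum_univ_four] <;> ring
  -- W is closed under v ↦ A v - c v and v ↦ As v - c v
  have hWA : ∀ v ∈ W, ∀ c : F, A.mulVec v - c • v ∈ W := fun v hv c =>
    W.sub_mem (hAW v hv) (W.smul_mem c hv)
  have hWAs : ∀ v ∈ W, ∀ c : F, As.mulVec v - c • v ∈ W := fun v hv c =>
    W.sub_mem (hAsW v hv) (W.smul_mem c hv)
  -- key operator computations
  have key0 : ∀ v ∈ W,
      (v 0) • (![(θ0-θ1)*(θ0-θ2), θ0-θ2, 0, 1] : Fin 4 → F) ∈ W := by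
    intro v hv
    have h := hWA _ (hWA v hv θ2) θ1
    have heq : A.mulVec (A.mulVec v - θ2 • v) - θ1 • (A.mulVec v - θ2 • v) =
        (v 0) • (![(θ0-θ1)*(θ0-θ2), θ0-θ2, 0, 1] : Fin 4 → F) := by
      funext i
      fin_cases i <;> simp [hAm, Matrix.vecHead, Matrix.vecTail, Pi.smul_apply, Pi.sub_apply, smul_eq_mul, Function.comp, show Fin.succ 0 = (1:Fin 4) from rfl, show Fin.succ 1 = (2:Fin 4) from rfl, show Fin.succ 2 = (3:Fin 4) from rfl] <;> ring
    rwa [heq] at h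
  have key3 : ∀ v ∈ W,
      (v 0 + (θ2-θ0)*(v 1 + φ₂*v 2 + (θ2-θ1)*v 3)) • (![0,0,0,1] : Fin 4 → F) ∈ W := by
    intro v hv
    have h := hWA _ (hWA v hv θ1) θ0
    have heq : A.mulVec (A.mulVec v - θ1 • v) - θ0 • (A.mulVec v - θ1 • v) =
        (v 0 + (θ2-θ0)*(v 1 + φ₂*v 2 + (θ2-θ1)*v 3)) • (![0,0,0,1] : Fin 4 → F) := by
      funext i
      fin_cases i <;> simp [hAm, Matrix.vecHead, Matrix.vecTail, Pi.smul_apply, Pi.sub_apply, smul_eq_mul, Function.comp, show Fin.succ 0 = (1:Fin 4) from rfl, show Fin.succ 1 = (2:Fin 4) from rfl, show Fin.succ 2 = (3:Fin 4) from rfl] <;> ring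
    rwa [heq] at h
  have keys0 : ∀ v ∈ W,
      ((θ0s-θ1s)*(θ0s-θ2s)*v 0 + φ₁*(θ0s-θ2s)*v 1 + φ*(θ0s-θ2s)*v 2 + φ*v 3) •
        (![1,0,0,0] : Fin 4 → F) ∈ W := by
    intro v hv
    have h := hWAs _ (hWAs v hv θ2s) θ1s
    have heq : As.mulVec (As.mulVec v - θ2s • v) - θ1s • (As.mulVec v - θ2s • v) =
        ((θ0s-θ1s)*(θ0s-θ2s)*v 0 + φ₁*(θ0s-θ2s)*v 1 + φ*(θ0s-θ2s)*v 2 + φ*v 3) •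
          (![1,0,0,0] : Fin 4 → F) := by
      funext i
      fin_cases i <;> simp [hAsm, Matrix.vecHead, Matrix.vecTail, Pi.smul_apply, Pi.sub_apply, smul_eq_mul, Function.comp, show Fin.succ 0 = (1:Fin 4) from rfl, show Fin.succ 1 = (2:Fin 4) from rfl, show Fin.succ 2 = (3:Fin 4) from rfl] <;> ring
    rwa [heq] at h
  have keys3 : ∀ v ∈ W,
      (v 3) • (![φ, 0, θ2s-θ0s, (θ2s-θ0s)*(θ2s-θ1s)] : Fin 4 → F) ∈ W := by
    intro v hv
    have h := hWAs _ (hWAs v hv θ1s) θ0s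
    have heq : As.mulVec (As.mulVec v - θ1s • v) - θ0s • (As.mulVec v - θ1s • v) =
        (v 3) • (![φ, 0, θ2s-θ0s, (θ2s-θ0s)*(θ2s-θ1s)] : Fin 4 → F) := by
      funext i
      fin_cases i <;> simp [hAsm, Matrix.vecHead, Matrix.vecTail, Pi.smul_apply, Pi.sub_apply, smul_eq_mul, Function.comp, show Fin.succ 0 = (1:Fin 4) from rfl, show Fin.succ 1 = (2:Fin 4) from rfl, show Fin.succ 2 = (3:Fin 4) from rfl] <;> ring
    rwa [heq] at h
  -- if e0 ∈ W then W = ⊤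
  have he0 : (![1,0,0,0] : Fin 4 → F) ∈ W → W = ⊤ := by
    intro h0
    have h1 : (![0,1,0,0] : Fin 4 → F) ∈ W := by
      have h := hWA _ h0 θ0
      have heq : A.mulVec ![1,0,0,0] - θ0 • ![1,0,0,0] = (![0,1,0,0] : Fin 4 → F) := by
        funext i; fin_cases i <;> simp [hAm, Matrix.vecHead, Matrix.vecTail, Pi.smul_apply, Pi.sub_apply, smul_eq_mul, Function.comp, show Fin.succ 0 = (1:Fin 4) from rfl, show Fin.succ 1 = (2:Fin 4) from rfl, show Fin.succ 2 = (3:Fin 4) from rfl] <;> ring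
      rwa [heq] at h
    have h3 : (![0,0,0,1] : Fin 4 → F) ∈ W := by
      have h := hWA _ h1 θ1
      have heq : A.mulVec ![0,1,0,0] - θ1 • ![0,1,0,0] = (![0,0,0,1] : Fin 4 → F) := by
        funext i; fin_cases i <;> simp [hAm, Matrix.vecHead, Matrix.vecTail, Pi.smul_apply, Pi.sub_apply, smul_eq_mul, Function.comp, show Fin.succ 0 = (1:Fin 4) from rfl, show Fin.succ 1 = (2:Fin 4) from rfl, show Fin.succ 2 = (3:Fin 4) from rfl] <;> ring
      rwa [heq] at h
    have h2 : (![0,0,1,0] : Fin 4 → F) ∈ W := by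
      have h := hWAs _ h3 θ2s
      have heq : As.mulVec ![0,0,0,1] - θ2s • ![0,0,0,1] = (![0,0,1,0] : Fin 4 → F) := by
        funext i; fin_cases i <;> simp [hAsm, Matrix.vecHead, Matrix.vecTail, Pi.smul_apply, Pi.sub_apply, smul_eq_mul, Function.comp, show Fin.succ 0 = (1:Fin 4) from rfl, show Fin.succ 1 = (2:Fin 4) from rfl, show Fin.succ 2 = (3:Fin 4) from rfl] <;> ring
      rwa [heq] at h
    rw [eq_top_iff]
    intro v _
    have hv : v = v 0 • ![1,0,0,0] + v 1 • ![0,1,0,0] + v 2 • ![0,0,1,0] + v 3 • ![0,0,0,1] := by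
      funext i; fin_cases i <;> simp
    rw [hv]
    exact W.add_mem (W.add_mem (W.add_mem (W.smul_mem _ h0) (W.smul_mem _ h1))
      (W.smul_mem _ h2)) (W.smul_mem _ h3)
  -- if e3 ∈ W then e0 ∈ W
  have he3 : (![0,0,0,1] : Fin 4 → F) ∈ W → (![1,0,0,0] : Fin 4 → F) ∈ W := by
    intro h3
    have h2 : (![0,0,1,0] : Fin 4 → F) ∈ W := by
      have h := hWAs _ h3 θ2s
      have heq : As.mulVec ![0,0,0,1] - θ2s • ![0,0,0,1] = (![0,0,1,0] : Fin 4 → F) := by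
        funext i; fin_cases i <;> simp [hAsm, Matrix.vecHead, Matrix.vecTail, Pi.smul_apply, Pi.sub_apply, smul_eq_mul, Function.comp, show Fin.succ 0 = (1:Fin 4) from rfl, show Fin.succ 1 = (2:Fin 4) from rfl, show Fin.succ 2 = (3:Fin 4) from rfl] <;> ring
      rwa [heq] at h
    have h0 : (φ • ![1,0,0,0] : Fin 4 → F) ∈ W := by
      have h := hWAs _ h2 θ1s
      have heq : As.mulVec ![0,0,1,0] - θ1s • ![0,0,1,0] = (φ • ![1,0,0,0] : Fin 4 → F) := by
        funext i; fin_cases i <;> simp [hAsm, Matrix.vecHead, Matrix.vecTail, Pi.smul_apply, Pi.sub_apply, smul_eq_mul, Function.comp, show Fin.succ 0 = (1:Fin 4) from rfl, show Fin.succ 1 = (2:Fin 4) from rfl, show Fin.succ 2 = (3:Fin 4) from rfl] <;> ring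
      rwa [heq] at h
    have := W.smul_mem φ⁻¹ h0
    rwa [smul_smul, inv_mul_cancel₀ hφ, one_smul] at this
  -- get a nonzero vector in W
  obtain ⟨x, hxW, hx⟩ := Submodule.exists_mem_ne_zero_of_ne_bot hbot
  -- case analysis
  by_cases hx0 : x 0 = 0
  · by_cases hx3 : x 3 = 0
    · by_cases hp : x 1 + φ₂ * x 2 = 0
      · -- then need second functional; show x = 0 or e0 ∈ W via keys0
        by_cases hq : φ₁ * x 1 + φ * x 2 = 0
        · -- x = 0, contradiction
          exfalso
          have hx2 : x 2 = 0 := by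
            have h1 : x 1 = -(φ₂ * x 2) := by linear_combination hp
            have : (φ - φ₁ * φ₂) * x 2 = 0 := by
              rw [h1] at hq; linear_combination hq
            rcases mul_eq_zero.mp this with h | h
            · exact absurd (sub_eq_zero.mp h) hne
            · exact h
          have hx1 : x 1 = 0 := by
            have : x 1 = -(φ₂ * x 2) := by linear_combination hp
            simp [hx2] at this; exact this
          exact hx (by funext i; fin_cases i <;> simp [hx0, hx1, hx2, hx3])
        · -- keys0 gives a nonzero multiple of e0
          have h := keys0 x hxW
          rw [hx0, hx3] at h
          have hc : (θ0s-θ1s)*(θ0s-θ2s)*0 + φ₁*(θ0s-θ2s)*x 1 + φ*(θ0s-θ2s)*x 2 + φ*0 =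
              (θ0s-θ2s) * (φ₁ * x 1 + φ * x 2) := by ring
          rw [hc] at h
          have hcne : (θ0s-θ2s) * (φ₁ * x 1 + φ * x 2) ≠ 0 := mul_ne_zero h02s' hq
          have := W.smul_mem ((θ0s-θ2s) * (φ₁ * x 1 + φ * x 2))⁻¹ h
          rw [smul_smul, inv_mul_cancel₀ hcne, one_smul] at this
          exact htop (he0 this)
      · -- key3 gives nonzero multiple of e3
        have h := key3 x hxW
        rw [hx0, hx3] at h
        have hc : 0 + (θ2-θ0)*(x 1 + φ₂*x 2 + (θ2-θ1)*0) = (θ2-θ0) * (x 1 + φ₂*x 2) := by ring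
        rw [hc] at h
        have hcne : (θ2-θ0) * (x 1 + φ₂*x 2) ≠ 0 :=
          mul_ne_zero (sub_ne_zero.mpr (Ne.symm h02)) hp
        have := W.smul_mem ((θ2-θ0) * (x 1 + φ₂*x 2))⁻¹ h
        rw [smul_smul, inv_mul_cancel₀ hcne, one_smul] at this
        exact htop (he0 (he3 this))
    · -- x 3 ≠ 0 : get w ∈ W, then e3 ∈ W
      have h := keys3 x hxW
      have hw := W.smul_mem (x 3)⁻¹ h
      rw [smul_smul, inv_mul_cancel₀ hx3, one_smul] at hw
      set w : Fin 4 → F := ![φ, 0, θ2s-θ0s, (θ2s-θ0s)*(θ2s-θ1s)] with hwdef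
      have h2 := key3 w hw
      have hc : w 0 + (θ2-θ0)*(w 1 + φ₂*w 2 + (θ2-θ1)*w 3) = ϕ := by
        simp only [hwdef]
        simp only [Matrix.cons_val_zero, Matrix.cons_val_one, Matrix.head_cons,
          Matrix.cons_val_two, Matrix.tail_cons, Matrix.cons_val_three]
        rw [hφ₂]
        field_simp
        ring
      rw [hc] at h2
      have := W.smul_mem ϕ⁻¹ h2
      rw [smul_smul, inv_mul_cancel₀ hϕ, one_smul] at this
      exact htop (he0 (he3 this))
  · -- x 0 ≠ 0 : get u ∈ W, then e0 ∈ W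
    have h := key0 x hxW
    have hu := W.smul_mem (x 0)⁻¹ h
    rw [smul_smul, inv_mul_cancel₀ hx0, one_smul] at hu
    set u : Fin 4 → F := ![(θ0-θ1)*(θ0-θ2), θ0-θ2, 0, 1] with hudef
    have h2 := keys0 u hu
    have hc : (θ0s-θ1s)*(θ0s-θ2s)*u 0 + φ₁*(θ0s-θ2s)*u 1 + φ*(θ0s-θ2s)*u 2 + φ*u 3 = ϕ := by
      simp only [hudef]
      simp only [Matrix.cons_val_zero, Matrix.cons_val_one, Matrix.head_cons,
        Matrix.cons_val_two, Matrix.tail_cons, Matrix.cons_val_three]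
      rw [hφ₁]
      field_simp
      ring
    rw [hc] at h2
    have := W.smul_mem ϕ⁻¹ h2
    rw [smul_smul, inv_mul_cancel₀ hϕ, one_smul] at this
    exact htop (he0 this)
end

section
/- Let F be a field, and let θ0,θ1,θ2,θ0*,θ1*,θ2*,φ,ϕ ∈ F with θ0,θ1,θ2 pairwise distinct, θ0*,θ1*,θ2* pairwise distinct, φ ≠ 0, ϕ ≠ 0, and φ ≠ φ₁·φ₂, where φ₁ = (ϕ-φ)/((θ0-θ2)(θ0*-θ2*)) - (θ0-θ1)(θ0*-θ1*) and φ₂ = (ϕ-φ)/((θ0-θ2)(θ0*-θ2*)) - (θ1-θ2)(θ1*-θ2*). Define the 4×4 matrices A with rows (θ0,0,0,0), (1,θ1,0,0), (0,0,θ1,0), (0,1,φ₂,θ2) and A* with rows (θ0*,φ₁,φ,0), (0,θ1*,0,0), (0,0,θ1*,1), (0,0,0,θ2*). Then: (a) A and A* are each diagonalizable over F; (b) the eigenvalues of A are θ0, θ1, θ2 with eigenspace dimensions 1, 2, 1 respectively, and likewise the eigenvalues of A* are θ0*, θ1*, θ2* with eigenspace dimensions 1, 2, 1; (c) no subspace W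 of F⁴ other than 0 and F⁴ is invariant under both A and A*. -/
lemma aux_det_fin_four {R : Type*} [CommRing R] (A : Matrix (Fin 4) (Fin 4) R) :
    A.det =
      A 0 0 * (A 1 1 * A 2 2 * A 3 3 - A 1 1 * A 2 3 * A 3 2 - A 1 2 * A 2 1 * A 3 3
        + A 1 2 * A 2 3 * A 3 1 + A 1 3 * A 2 1 * A 3 2 - A 1 3 * A 2 2 * A 3 1)
      - A 0 1 * (A 1 0 * A 2 2 * A 3 3 - A 1 0 * A 2 3 * A 3 2 - A 1 2 * A 2 0 * A 3 3
        + A 1 2 * A 2 3 * A 3 0 + A 1 3 * A 2 0 * A 3 2 - A 1 3 * A 2 2 * A 3 0)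
      + A 0 2 * (A 1 0 * A 2 1 * A 3 3 - A 1 0 * A 2 3 * A 3 1 - A 1 1 * A 2 0 * A 3 3
        + A 1 1 * A 2 3 * A 3 0 + A 1 3 * A 2 0 * A 3 1 - A 1 3 * A 2 1 * A 3 0)
      - A 0 3 * (A 1 0 * A 2 1 * A 3 2 - A 1 0 * A 2 2 * A 3 1 - A 1 1 * A 2 0 * A 3 2
        + A 1 1 * A 2 2 * A 3 0 + A 1 2 * A 2 0 * A 3 1 - A 1 2 * A 2 1 * A 3 0) := by
  rw [Matrix.det_succ_row_zero]
  simp [Fin.sum_univ_succ, Matrix.det_fin_three, Matrix.submatrix, Fin.succAbove, show (Fin.succ 2 : Fin 4) = 3 from rfl, show ((1:Fin 4) < 3) from by decide, show (Fin.castSucc 2 : Fin 4) = 2 from rfl]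
  ring

lemma aux_diag_conj {F : Type*} [Field F] (P A : Matrix (Fin 4) (Fin 4) F) (d : Fin 4 → F)
    (hP : IsUnit P.det) (h : A * P = P * Matrix.diagonal d) :
    IsUnit P ∧ (P⁻¹ * A * P).IsDiag := by
  refine ⟨(Matrix.isUnit_iff_isUnit_det P).2 hP, ?_⟩
  have : P⁻¹ * A * P = Matrix.diagonal d := by
    rw [Matrix.mul_assoc, h, ← Matrix.mul_assoc, Matrix.nonsing_inv_mul _ hP, Matrix.one_mul]
  rw [this]
  exact Matrix.isDiag_diagonal d

open Module in
lemma aux_dims {F : Type*} [Field F] (f : Module.End F (Fin 4 → F)) (a b c : F)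
    (hab : a ≠ b) (hac : a ≠ c) (hbc : b ≠ c)
    (v0 u1 u2 v3 : Fin 4 → F)
    (hv0 : f v0 = a • v0) (hv0' : v0 ≠ 0)
    (hu1 : f u1 = b • u1) (hu2 : f u2 = b • u2) (hind : LinearIndependent F ![u1, u2])
    (hv3 : f v3 = c • v3) (hv3' : v3 ≠ 0) :
    finrank F (Module.End.eigenspace f a) = 1 ∧
    finrank F (Module.End.eigenspace f b) = 2 ∧
    finrank F (Module.End.eigenspace f c) = 1 := by
  set Ea := Module.End.eigenspace f a with hEa
  set Eb := Module.End.eigenspace f b with hEb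
  set Ec := Module.End.eigenspace f c with hEc
  have ha1 : 1 ≤ finrank F Ea := by
    rw [← finrank_span_singleton (K := F) hv0']
    exact Submodule.finrank_mono ((Submodule.span_singleton_le_iff_mem _ _).2
      (Module.End.mem_eigenspace_iff.2 hv0))
  have hb2 : 2 ≤ finrank F Eb := by
    have hle : Submodule.span F (Set.range ![u1, u2]) ≤ Eb := by
      rw [Submodule.span_le]
      rintro x ⟨i, rfl⟩
      fin_cases i
      · exact Module.End.mem_eigenspace_iff.2 hu1
      · exact Module.End.mem_eigenspace_iff.2 hu2
    have := finrank_span_eq_card hind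
    simp only [Fintype.card_fin] at this
    calc 2 = finrank F (Submodule.span F (Set.range ![u1, u2])) := by omega
    _ ≤ finrank F Eb := Submodule.finrank_mono hle
  have hc1 : 1 ≤ finrank F Ec := by
    rw [← finrank_span_singleton (K := F) hv3']
    exact Submodule.finrank_mono ((Submodule.span_singleton_le_iff_mem _ _).2
      (Module.End.mem_eigenspace_iff.2 hv3))
  have hind' := Module.End.eigenspaces_iSupIndep f
  have hdab : Disjoint Ea Eb := by
    have := hind'.disjoint_biSup (x := a) (y := {b}) (by simpa using hab)
    simpa using this
  have hdabc : Disjoint (Ea ⊔ Eb) Ec := by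
    have := hind'.disjoint_biSup (x := c) (y := {a, b})
      (by simp [hac.symm, hbc.symm, eq_comm])
    rw [disjoint_comm]
    have heq : (⨆ i ∈ ({a, b} : Set F), f.eigenspace i) = Ea ⊔ Eb := by
      rw [iSup_insert, iSup_singleton]
    rwa [heq] at this
  have hr1 : finrank F (Ea ⊔ Eb : Submodule F (Fin 4 → F)) = finrank F Ea + finrank F Eb := by
    have := Submodule.finrank_sup_add_finrank_inf_eq Ea Eb
    rw [hdab.eq_bot] at this
    simpa using this
  have hr2 : finrank F (Ea ⊔ Eb ⊔ Ec : Submodule F (Fin 4 → F))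
      = finrank F Ea + finrank F Eb + finrank F Ec := by
    have := Submodule.finrank_sup_add_finrank_inf_eq (Ea ⊔ Eb) Ec
    rw [hdabc.eq_bot] at this
    simpa [hr1] using this
  have hle4 : finrank F Ea + finrank F Eb + finrank F Ec ≤ 4 := by
    rw [← hr2]
    have := Submodule.finrank_le (Ea ⊔ Eb ⊔ Ec)
    rwa [Module.finrank_fin_fun] at this
  omega



set_option maxHeartbeats 2000000 in
theorem stmt13 (F : Type*) [Field F]
    (θ0 θ1 θ2 θ0s θ1s θ2s φ ϕ : F)
    (h01 : θ0 ≠ θ1) (h02 : θ0 ≠ θ2) (h12 : θ1 ≠ θ2)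
    (h01s : θ0s ≠ θ1s) (h02s : θ0s ≠ θ2s) (h12s : θ1s ≠ θ2s)
    (hφ : φ ≠ 0) (hϕ : ϕ ≠ 0)
    (φ₁ φ₂ : F)
    (hφ₁ : φ₁ = (ϕ - φ) / ((θ0 - θ2) * (θ0s - θ2s)) - (θ0 - θ1) * (θ0s - θ1s))
    (hφ₂ : φ₂ = (ϕ - φ) / ((θ0 - θ2) * (θ0s - θ2s)) - (θ1 - θ2) * (θ1s - θ2s))
    (hne : φ ≠ φ₁ * φ₂)
    (A As : Matrix (Fin 4) (Fin 4) F)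
    (hA : A = !![θ0, 0, 0, 0; 1, θ1, 0, 0; 0, 0, θ1, 0; 0, 1, φ₂, θ2])
    (hAs : As = !![θ0s, φ₁, φ, 0; 0, θ1s, 0, 0; 0, 0, θ1s, 1; 0, 0, 0, θ2s]) :
    (∃ P : Matrix (Fin 4) (Fin 4) F, IsUnit P ∧ (P⁻¹ * A * P).IsDiag) ∧
    (∃ P : Matrix (Fin 4) (Fin 4) F, IsUnit P ∧ (P⁻¹ * As * P).IsDiag) ∧
    spectrum F A = {θ0, θ1, θ2} ∧
    Module.finrank F (Module.End.eigenspace A.mulVecLin θ0) = 1 ∧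
    Module.finrank F (Module.End.eigenspace A.mulVecLin θ1) = 2 ∧
    Module.finrank F (Module.End.eigenspace A.mulVecLin θ2) = 1 ∧
    spectrum F As = {θ0s, θ1s, θ2s} ∧
    Module.finrank F (Module.End.eigenspace As.mulVecLin θ0s) = 1 ∧
    Module.finrank F (Module.End.eigenspace As.mulVecLin θ1s) = 2 ∧
    Module.finrank F (Module.End.eigenspace As.mulVecLin θ2s) = 1 ∧
    ¬ ∃ W : Submodule F (Fin 4 → F),
        (∀ x ∈ W, A.mulVec x ∈ W) ∧ (∀ x ∈ W, As.mulVec x ∈ W) ∧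
        W ≠ ⊥ ∧ W ≠ ⊤ := by
  have e01 := sub_ne_zero.2 h01
  have e02 := sub_ne_zero.2 h02
  have e12 := sub_ne_zero.2 h12
  have e01s := sub_ne_zero.2 h01s
  have e02s := sub_ne_zero.2 h02s
  have e12s := sub_ne_zero.2 h12s
  have e10s : θ1s - θ0s ≠ 0 := sub_ne_zero.2 (Ne.symm h01s)
  have e20s : θ2s - θ0s ≠ 0 := sub_ne_zero.2 (Ne.symm h02s)
  have e21s : θ2s - θ1s ≠ 0 := sub_ne_zero.2 (Ne.symm h12s)
  have hdimsA : Module.finrank F (Module.End.eigenspace A.mulVecLin θ0) = 1 ∧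
      Module.finrank F (Module.End.eigenspace A.mulVecLin θ1) = 2 ∧
      Module.finrank F (Module.End.eigenspace A.mulVecLin θ2) = 1 := by
    apply aux_dims A.mulVecLin θ0 θ1 θ2 h01 h02 h12
      ![(θ0-θ1)*(θ0-θ2), θ0-θ2, 0, 1] ![0, θ1-θ2, 0, 1] ![0, 0, θ1-θ2, φ₂] ![0, 0, 0, 1]
    · subst hA; funext i; fin_cases i <;>
        simp [Matrix.mulVecLin_apply, Matrix.mulVec, dotProduct, Fin.sum_univ_four] <;> ring
    · intro h; have := congrFun h 3; simpa using this
    · subst hA; funext i; fin_cases i <;>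
        simp [Matrix.mulVecLin_apply, Matrix.mulVec, dotProduct, Fin.sum_univ_four] <;> ring
    · subst hA; funext i; fin_cases i <;>
        simp [Matrix.mulVecLin_apply, Matrix.mulVec, dotProduct, Fin.sum_univ_four] <;> ring
    · rw [LinearIndependent.pair_iff]
      intro a b hab
      constructor
      · have := congrFun hab 1; simpa [mul_eq_zero, e12] using this
      · have := congrFun hab 2; simpa [mul_eq_zero, e12] using this
    · subst hA; funext i; fin_cases i <;>
        simp [Matrix.mulVecLin_apply, Matrix.mulVec, dotProduct, Fin.sum_univ_four]
    · intro h; have := congrFun h 3; simpa using this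
  have hdimsAs : Module.finrank F (Module.End.eigenspace As.mulVecLin θ0s) = 1 ∧
      Module.finrank F (Module.End.eigenspace As.mulVecLin θ1s) = 2 ∧
      Module.finrank F (Module.End.eigenspace As.mulVecLin θ2s) = 1 := by
    apply aux_dims As.mulVecLin θ0s θ1s θ2s h01s h02s h12s
      ![1, 0, 0, 0] ![φ₁, θ1s-θ0s, 0, 0] ![φ, 0, θ1s-θ0s, 0]
      ![φ, 0, θ2s-θ0s, (θ2s-θ0s)*(θ2s-θ1s)]
    · subst hAs; funext i; fin_cases i <;>
        simp [Matrix.mulVecLin_apply, Matrix.mulVec, dotProduct, Fin.sum_univ_four]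
    · intro h; have := congrFun h 0; simpa using this
    · subst hAs; funext i; fin_cases i <;>
        simp [Matrix.mulVecLin_apply, Matrix.mulVec, dotProduct, Fin.sum_univ_four] <;> ring
    · subst hAs; funext i; fin_cases i <;>
        simp [Matrix.mulVecLin_apply, Matrix.mulVec, dotProduct, Fin.sum_univ_four] <;> ring
    · rw [LinearIndependent.pair_iff]
      intro a b hab
      constructor
      · have := congrFun hab 1; simpa [mul_eq_zero, e10s] using this
      · have := congrFun hab 2; simpa [mul_eq_zero, e10s] using this
    · subst hAs; funext i; fin_cases i <;>
        simp [Matrix.mulVecLin_apply, Matrix.mulVec, dotProduct, Fin.sum_univ_four] <;> ring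
    · intro h; have := congrFun h 0; simpa [hφ] using this
  refine ⟨?_, ?_, ?_, ?_, ?_, ?_, ?_, ?_, ?_, ?_, ?_⟩
  · -- A diagonalizable
    obtain ⟨h1, h2⟩ := aux_diag_conj (F := F)
        !![(θ0-θ1)*(θ0-θ2), 0, 0, 0; θ0-θ2, θ1-θ2, 0, 0; 0, 0, θ1-θ2, 0; 1, 1, φ₂, 1] A
        ![θ0, θ1, θ1, θ2]
        (by
          have hdet : (!![(θ0-θ1)*(θ0-θ2), 0, 0, 0; θ0-θ2, θ1-θ2, 0, 0; 0, 0, θ1-θ2, 0; 1, 1, φ₂, 1] : Matrix (Fin 4) (Fin 4) F).det = ((θ0-θ1)*(θ0-θ2))*((θ1-θ2)*(θ1-θ2)) := by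
            rw [aux_det_fin_four]
            simp only [Matrix.of_apply, Matrix.cons_val_zero, Matrix.cons_val_one, Matrix.head_cons,
              Matrix.cons_val_two, Matrix.tail_cons, Matrix.cons_val_three, Matrix.head_fin_const,
              Matrix.cons_val', Matrix.empty_val', Matrix.cons_val_fin_one]
            ring
          rw [hdet, isUnit_iff_ne_zero]
          exact mul_ne_zero (mul_ne_zero e01 e02) (mul_ne_zero e12 e12))
        (by
          subst hA
          ext i j
          fin_cases i <;> fin_cases j <;>
            simp [Matrix.mul_apply, Fin.sum_univ_four, Matrix.diagonal] <;> ring)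
    exact ⟨_, h1, h2⟩
  · -- As diagonalizable
    obtain ⟨h1, h2⟩ := aux_diag_conj (F := F)
        !![1, φ₁, φ, φ; 0, θ1s-θ0s, 0, 0; 0, 0, θ1s-θ0s, θ2s-θ0s; 0, 0, 0, (θ2s-θ0s)*(θ2s-θ1s)] As
        ![θ0s, θ1s, θ1s, θ2s]
        (by
          have hdet : (!![1, φ₁, φ, φ; 0, θ1s-θ0s, 0, 0; 0, 0, θ1s-θ0s, θ2s-θ0s; 0, 0, 0, (θ2s-θ0s)*(θ2s-θ1s)] : Matrix (Fin 4) (Fin 4) F).det = ((θ1s-θ0s)*(θ1s-θ0s))*((θ2s-θ0s)*(θ2s-θ1s)) := by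
            rw [aux_det_fin_four]
            simp only [Matrix.of_apply, Matrix.cons_val_zero, Matrix.cons_val_one, Matrix.head_cons,
              Matrix.cons_val_two, Matrix.tail_cons, Matrix.cons_val_three, Matrix.head_fin_const,
              Matrix.cons_val', Matrix.empty_val', Matrix.cons_val_fin_one]
            ring
          rw [hdet, isUnit_iff_ne_zero]
          exact mul_ne_zero (mul_ne_zero e10s e10s) (mul_ne_zero e20s e21s))
        (by
          subst hAs
          ext i j
          fin_cases i <;> fin_cases j <;>
            simp [Matrix.mul_apply, Fin.sum_univ_four, Matrix.diagonal, Matrix.vecHead,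
              Matrix.vecTail] <;> ring)
    exact ⟨_, h1, h2⟩
  · -- spectrum of A
    have h : ∀ μ : F, (algebraMap F (Matrix (Fin 4) (Fin 4) F)) μ - A
        = !![μ-θ0, 0,0,0; -1, μ-θ1,0,0; 0,0,μ-θ1,0; 0,-1,-φ₂, μ-θ2] := by
      subst hA; intro μ; ext i j; fin_cases i <;> fin_cases j <;>
        simp [Matrix.algebraMap_matrix_apply, Matrix.vecHead, Matrix.vecTail]
    have hdet : ∀ μ : F, ((algebraMap F (Matrix (Fin 4) (Fin 4) F)) μ - A).det
        = (μ-θ0)*((μ-θ1)*((μ-θ1)*(μ-θ2))) := by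
      intro μ; rw [h, aux_det_fin_four]
      simp only [Matrix.of_apply, Matrix.cons_val_zero, Matrix.cons_val_one, Matrix.head_cons,
        Matrix.cons_val_two, Matrix.tail_cons, Matrix.cons_val_three, Matrix.head_fin_const,
        Matrix.cons_val', Matrix.empty_val', Matrix.cons_val_fin_one]
      ring
    ext μ
    rw [spectrum.mem_iff, Matrix.isUnit_iff_isUnit_det, isUnit_iff_ne_zero, not_ne_iff, hdet]
    simp only [Set.mem_insert_iff, Set.mem_singleton_iff, mul_eq_zero, sub_eq_zero]
    tauto
  · -- dim eigenspace A θ0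
    exact (hdimsA).1
  · exact (hdimsA).2.1
  · exact (hdimsA).2.2
  · -- spectrum of As
    have h : ∀ μ : F, (algebraMap F (Matrix (Fin 4) (Fin 4) F)) μ - As
        = !![μ-θ0s, -φ₁, -φ, 0; 0, μ-θ1s, 0, 0; 0, 0, μ-θ1s, -1; 0, 0, 0, μ-θ2s] := by
      subst hAs; intro μ; ext i j; fin_cases i <;> fin_cases j <;>
        simp [Matrix.algebraMap_matrix_apply, Matrix.vecHead, Matrix.vecTail]
    have hdet : ∀ μ : F, ((algebraMap F (Matrix (Fin 4) (Fin 4) F)) μ - As).det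
        = (μ-θ0s)*((μ-θ1s)*((μ-θ1s)*(μ-θ2s))) := by
      intro μ; rw [h, aux_det_fin_four]
      simp only [Matrix.of_apply, Matrix.cons_val_zero, Matrix.cons_val_one, Matrix.head_cons,
        Matrix.cons_val_two, Matrix.tail_cons, Matrix.cons_val_three, Matrix.head_fin_const,
        Matrix.cons_val', Matrix.empty_val', Matrix.cons_val_fin_one]
      ring
    ext μ
    rw [spectrum.mem_iff, Matrix.isUnit_iff_isUnit_det, isUnit_iff_ne_zero, not_ne_iff, hdet]
    simp only [Set.mem_insert_iff, Set.mem_singleton_iff, mul_eq_zero, sub_eq_zero]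
    tauto
  · exact (hdimsAs).1
  · exact (hdimsAs).2.1
  · exact (hdimsAs).2.2
  · -- no nontrivial common invariant subspace
    subst hA hAs
    rintro ⟨W, hWA, hWAs, hbot, htop⟩
    -- basis vector chain lemmas
    have chain_e3 : (![0,0,0,1] : Fin 4 → F) ∈ W → (![0,0,1,0] : Fin 4 → F) ∈ W := by
      intro he3
      have key : (![0,0,1,0] : Fin 4 → F) =
          (!![θ0s, φ₁, φ, 0; 0, θ1s, 0, 0; 0, 0, θ1s, 1; 0, 0, 0, θ2s]).mulVec ![0,0,0,1]
            - θ2s • ![0,0,0,1] := by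
        funext j; fin_cases j <;>
          simp [Matrix.mulVec, dotProduct, Fin.sum_univ_four]
      rw [key]; exact W.sub_mem (hWAs _ he3) (W.smul_mem _ he3)
    have chain_e2 : (![0,0,1,0] : Fin 4 → F) ∈ W → (![1,0,0,0] : Fin 4 → F) ∈ W := by
      intro he2
      have key : (![1,0,0,0] : Fin 4 → F) =
          φ⁻¹ • ((!![θ0s, φ₁, φ, 0; 0, θ1s, 0, 0; 0, 0, θ1s, 1; 0, 0, 0, θ2s]).mulVec ![0,0,1,0]
            - θ1s • ![0,0,1,0]) := by
        funext j; fin_cases j <;>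
          simp [Matrix.mulVec, dotProduct, Fin.sum_univ_four, Matrix.vecHead, Matrix.vecTail, inv_mul_cancel₀ hφ]
      rw [key]; exact W.smul_mem _ (W.sub_mem (hWAs _ he2) (W.smul_mem _ he2))
    have chain_e0 : (![1,0,0,0] : Fin 4 → F) ∈ W → (![0,1,0,0] : Fin 4 → F) ∈ W := by
      intro he0
      have key : (![0,1,0,0] : Fin 4 → F) =
          (!![θ0, 0, 0, 0; 1, θ1, 0, 0; 0, 0, θ1, 0; 0, 1, φ₂, θ2]).mulVec ![1,0,0,0]
            - θ0 • ![1,0,0,0] := by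
        funext j; fin_cases j <;>
          simp [Matrix.mulVec, dotProduct, Fin.sum_univ_four]
      rw [key]; exact W.sub_mem (hWA _ he0) (W.smul_mem _ he0)
    have chain_e1 : (![0,1,0,0] : Fin 4 → F) ∈ W → (![0,0,0,1] : Fin 4 → F) ∈ W := by
      intro he1
      have key : (![0,0,0,1] : Fin 4 → F) =
          (!![θ0, 0, 0, 0; 1, θ1, 0, 0; 0, 0, θ1, 0; 0, 1, φ₂, θ2]).mulVec ![0,1,0,0]
            - θ1 • ![0,1,0,0] := by
        funext j; fin_cases j <;>
          simp [Matrix.mulVec, dotProduct, Fin.sum_univ_four]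
      rw [key]; exact W.sub_mem (hWA _ he1) (W.smul_mem _ he1)
    have wtop : (![0,0,0,1] : Fin 4 → F) ∈ W ∨ (![1,0,0,0] : Fin 4 → F) ∈ W → W = ⊤ := by
      intro h
      have he3 : (![0,0,0,1] : Fin 4 → F) ∈ W := by
        rcases h with h | h
        · exact h
        · exact chain_e1 (chain_e0 h)
      have he2 := chain_e3 he3
      have he0 := chain_e2 he2
      have he1 := chain_e0 he0
      rw [Submodule.eq_top_iff']
      intro x
      have hx : x = x 0 • ![1,0,0,0] + x 1 • ![0,1,0,0] + x 2 • ![0,0,1,0]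
          + x 3 • (![0,0,0,1] : Fin 4 → F) := by
        funext j; fin_cases j <;> simp
      rw [hx]
      exact W.add_mem (W.add_mem (W.add_mem (W.smul_mem _ he0) (W.smul_mem _ he1))
        (W.smul_mem _ he2)) (W.smul_mem _ he3)
    have hmvA : ∀ v : Fin 4 → F,
        (!![θ0, 0, 0, 0; 1, θ1, 0, 0; 0, 0, θ1, 0; 0, 1, φ₂, θ2]).mulVec v
          = ![θ0*v 0, v 0 + θ1*v 1, θ1*v 2, v 1 + φ₂*v 2 + θ2*v 3] := by
      intro v; funext j; fin_cases j <;>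
        simp [Matrix.mulVec, dotProduct, Fin.sum_univ_four] <;> ring
    have hmvAs : ∀ v : Fin 4 → F,
        (!![θ0s, φ₁, φ, 0; 0, θ1s, 0, 0; 0, 0, θ1s, 1; 0, 0, 0, θ2s]).mulVec v
          = ![θ0s*v 0 + φ₁*v 1 + φ*v 2, θ1s*v 1, θ1s*v 2 + v 3, θ2s*v 3] := by
      intro v; funext j; fin_cases j <;>
        simp [Matrix.mulVec, dotProduct, Fin.sum_univ_four] <;> ring
    have hl : ∀ w ∈ W, w 0 + (θ2-θ0) * w 1 + φ₂*(θ2-θ0) * w 2 + (θ2-θ0)*(θ2-θ1) * w 3 = 0 := by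
      intro w hw
      by_contra hL
      set M := !![θ0, 0, 0, 0; 1, θ1, 0, 0; 0, 0, θ1, 0; 0, 1, φ₂, θ2] with hM
      have hmv := hmvA
      have humem : M.mulVec (M.mulVec w) - (θ0+θ1) • M.mulVec w + (θ0*θ1) • w ∈ W :=
        W.add_mem (W.sub_mem (hWA _ (hWA _ hw)) (W.smul_mem _ (hWA _ hw))) (W.smul_mem _ hw)
      have key : M.mulVec (M.mulVec w) - (θ0+θ1) • M.mulVec w + (θ0*θ1) • w
          = (w 0 + (θ2-θ0) * w 1 + φ₂*(θ2-θ0) * w 2 + (θ2-θ0)*(θ2-θ1) * w 3) • ![0,0,0,1] := by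
        rw [hmv w, hmv]
        funext j; fin_cases j <;> simp <;> ring
      rw [key] at humem
      have he3 : (![0,0,0,1] : Fin 4 → F) ∈ W := by
        have := W.smul_mem (w 0 + (θ2-θ0) * w 1 + φ₂*(θ2-θ0) * w 2 + (θ2-θ0)*(θ2-θ1) * w 3)⁻¹ humem
        rwa [inv_smul_smul₀ hL] at this
      exact htop (wtop (Or.inl he3))
    have hls : ∀ w ∈ W, (θ0s-θ1s)*(θ0s-θ2s) * w 0 + φ₁*(θ0s-θ2s) * w 1
        + φ*(θ0s-θ2s) * w 2 + φ * w 3 = 0 := by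
      intro w hw
      by_contra hL
      set M := !![θ0s, φ₁, φ, 0; 0, θ1s, 0, 0; 0, 0, θ1s, 1; 0, 0, 0, θ2s] with hM
      have hmv := hmvAs
      have humem : M.mulVec (M.mulVec w) - (θ1s+θ2s) • M.mulVec w + (θ1s*θ2s) • w ∈ W :=
        W.add_mem (W.sub_mem (hWAs _ (hWAs _ hw)) (W.smul_mem _ (hWAs _ hw))) (W.smul_mem _ hw)
      have key : M.mulVec (M.mulVec w) - (θ1s+θ2s) • M.mulVec w + (θ1s*θ2s) • w
          = ((θ0s-θ1s)*(θ0s-θ2s) * w 0 + φ₁*(θ0s-θ2s) * w 1 + φ*(θ0s-θ2s) * w 2 + φ * w 3)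
            • ![1,0,0,0] := by
        rw [hmv w, hmv]
        funext j; fin_cases j <;> simp <;> ring
      rw [key] at humem
      have he0 : (![1,0,0,0] : Fin 4 → F) ∈ W := by
        have := W.smul_mem ((θ0s-θ1s)*(θ0s-θ2s) * w 0 + φ₁*(θ0s-θ2s) * w 1
          + φ*(θ0s-θ2s) * w 2 + φ * w 3)⁻¹ humem
        rwa [inv_smul_smul₀ hL] at this
      exact htop (wtop (Or.inr he0))
    obtain ⟨w, hw, hw0⟩ := (Submodule.ne_bot_iff W).1 hbot
    have eq0 := hl w hw
    have eq1 := hls w hw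
    have eq2 : θ0s*w 0 + (φ₁+(θ2-θ0)*θ1s)*w 1 + (φ+φ₂*(θ2-θ0)*θ1s)*w 2
        + (φ₂*(θ2-θ0)+(θ2-θ0)*(θ2-θ1)*θ2s)*w 3 = 0 := by
      have h2 := hl _ (hWAs w hw)
      rw [hmvAs w] at h2
      simp only [Matrix.cons_val_zero, Matrix.cons_val_one, Matrix.head_cons,
        Matrix.cons_val_two, Matrix.tail_cons, Matrix.cons_val_three] at h2
      linear_combination h2
    have eq3 : ((θ0s-θ1s)*(θ0s-θ2s)*θ0+φ₁*(θ0s-θ2s))*w 0 + (φ₁*(θ0s-θ2s)*θ1+φ)*w 1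
        + (φ*(θ0s-θ2s)*θ1+φ*φ₂)*w 2 + φ*θ2*w 3 = 0 := by
      have h3 := hls _ (hWA w hw)
      rw [hmvA w] at h3
      simp only [Matrix.cons_val_zero, Matrix.cons_val_one, Matrix.head_cons,
        Matrix.cons_val_two, Matrix.tail_cons, Matrix.cons_val_three] at h3
      linear_combination h3
    set B : Matrix (Fin 4) (Fin 4) F :=
      !![1, (θ2-θ0), φ₂*(θ2-θ0), (θ2-θ0)*(θ2-θ1);
         (θ0s-θ1s)*(θ0s-θ2s), φ₁*(θ0s-θ2s), φ*(θ0s-θ2s), φ;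
         θ0s, φ₁+(θ2-θ0)*θ1s, φ+φ₂*(θ2-θ0)*θ1s, φ₂*(θ2-θ0)+(θ2-θ0)*(θ2-θ1)*θ2s;
         (θ0s-θ1s)*(θ0s-θ2s)*θ0+φ₁*(θ0s-θ2s), φ₁*(θ0s-θ2s)*θ1+φ, φ*(θ0s-θ2s)*θ1+φ*φ₂, φ*θ2]
      with hB
    have hBw : B.mulVec w = 0 := by
      funext i; fin_cases i <;>
        simp [hB, Matrix.mulVec, dotProduct, Fin.sum_univ_four]
      · linear_combination eq0
      · linear_combination eq1
      · linear_combination eq2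
      · linear_combination eq3
    have key : ϕ = φ + (θ0-θ2)*(θ0s-θ2s)*(φ₁+(θ0-θ1)*(θ0s-θ1s)) := by
      rw [hφ₁]
      field_simp [sub_ne_zero.2 h02, sub_ne_zero.2 h02s]
      ring
    have hrel : φ₁ = φ₂ + (θ1-θ2)*(θ1s-θ2s) - (θ0-θ1)*(θ0s-θ1s) := by
      rw [hφ₁, hφ₂]; ring
    have hdet : B.det = ϕ^2*(φ₁*φ₂ - φ) := by
      rw [hB, aux_det_fin_four]
      simp only [Matrix.of_apply, Matrix.cons_val_zero, Matrix.cons_val_one, Matrix.head_cons,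
        Matrix.cons_val_two, Matrix.tail_cons, Matrix.cons_val_three, Matrix.head_fin_const,
        Matrix.cons_val', Matrix.empty_val', Matrix.cons_val_fin_one]
      rw [key, hrel]
      ring
    have hdu : IsUnit B.det := by
      rw [hdet, isUnit_iff_ne_zero]
      exact mul_ne_zero (pow_ne_zero 2 hϕ) (sub_ne_zero.2 fun h => hne h.symm)
    apply hw0
    calc w = (1 : Matrix (Fin 4) (Fin 4) F).mulVec w := (Matrix.one_mulVec w).symm
    _ = (B⁻¹ * B).mulVec w := by rw [Matrix.nonsing_inv_mul B hdu]
    _ = B⁻¹.mulVec (B.mulVec w) := (Matrix.mulVec_mulVec w B⁻¹ B).symm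
    _ = 0 := by rw [hBw, Matrix.mulVec_zero]
end

section
/- Let F be a field and θ0,θ1,θ2,θ0*,θ1*,θ2*,φ,ϕ ∈ F with θ0,θ1,θ2 pairwise distinct, θ0*,θ1*,θ2* pairwise distinct, and φ ≠ 0, ϕ ≠ 0. Define φ₁,φ₂,ϕ₁,ϕ₂ by φ₁ = (ϕ-φ)/((θ0-θ2)(θ0*-θ2*)) - (θ0-θ1)(θ0*-θ1*), φ₂ = (ϕ-φ)/((θ0-θ2)(θ0*-θ2*)) - (θ1-θ2)(θ1*-θ2*), ϕ₁ = (φ-ϕ)/((θ2-θ0)(θ0*-θ2*)) - (θ2-θ1)(θ0*-θ1*), ϕ₂ = (φ-ϕ)/((θ2-θ0)(θ0*-θ2*)) - (θ1-θ0)(θ1*-θ2*). Let B be the 4×4 matrix with rows (θ0,0,0,0),(1,θ1,0,0),(0,0,θ1,0),(0,1,φ₂,θ2) and let T be the 4×4 matrix with rows (φ, (θ0-θ2)φ, (θ0-θ2)φφ₁, (θ0-θ2)(θ0-θ1)φ), (0, φ, (θ0-θ2)(θ1*-θ0*)φ, (θ0-θ2)φ), (θ2*-θ0*, (θ2*-θ0*)(θ1-θ2),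 φ, 0), ((θ2*-θ0*)(θ2*-θ1*), (θ2*-θ0*)φ₂, (θ2*-θ0*)φ, φ). Then T is invertible and T⁻¹·B·T equals the matrix with rows (θ2,0,0,0), (1,θ1,0,0), (0,0,θ1,0), (0,1,φ₁,θ0). -/
/-!
Put `q := (ϕ - φ) / ((θ0 - θ2) (θ0* - θ2*))`, so that `φ₁ = q - (θ0 - θ1)(θ0* - θ1*)`,
`φ₂ = q - (θ1 - θ2)(θ1* - θ2*)` and `ϕ = φ + (θ0 - θ2)(θ0* - θ2*) q`. Then `B`, `T` and the
target matrix `B'` are polynomial in `q`, and `B T = T B'` is a polynomial identity in `q`, while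
`det T = φ² (φ + (θ0 - θ2)(θ0* - θ2*) q)² = φ² ϕ²`.
-/

theorem Matrix.inv_mul_mul_eq_of_mul_eq {n α : Type*} [Fintype n] [DecidableEq n] [CommRing α]
    {A B C : Matrix n n α} (hA : IsUnit A.det) (h : B * A = A * C) : A⁻¹ * B * A = C := by
  rw [mul_assoc, h, Matrix.nonsing_inv_mul_cancel_left _ _ hA]

namespace TridiagonalSystem

variable {F : Type*} [Field F]

/-- The matrix of `A` in a split basis, with eigenvalue sequence `a, b, c`. -/
def splitMatrix (a b c x : F) : Matrix (Fin 4) (Fin 4) F :=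
  !![a, 0, 0, 0; 1, b, 0, 0; 0, 0, b, 0; 0, 1, x, c]

def transitionMatrix (θ0 θ1 θ2 θ0s θ1s θ2s φ q : F) : Matrix (Fin 4) (Fin 4) F :=
  let φ₁ := q - (θ0 - θ1) * (θ0s - θ1s)
  let φ₂ := q - (θ1 - θ2) * (θ1s - θ2s)
  !![φ, (θ0 - θ2) * φ, (θ0 - θ2) * φ * φ₁, (θ0 - θ2) * (θ0 - θ1) * φ;
     0, φ, (θ0 - θ2) * (θ1s - θ0s) * φ, (θ0 - θ2) * φ;
     θ2s - θ0s, (θ2s - θ0s) * (θ1 - θ2), φ, 0;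
     (θ2s - θ0s) * (θ2s - θ1s), (θ2s - θ0s) * φ₂, (θ2s - θ0s) * φ, φ]

theorem det_transitionMatrix (θ0 θ1 θ2 θ0s θ1s θ2s φ q : F) :
    (transitionMatrix θ0 θ1 θ2 θ0s θ1s θ2s φ q).det =
      φ ^ 2 * (φ + (θ0 - θ2) * (θ0s - θ2s) * q) ^ 2 := by
  simp [transitionMatrix, Matrix.det_succ_row_zero, Fin.sum_univ_succ, Fin.succAbove]
  ring

theorem splitMatrix_mul_transitionMatrix (θ0 θ1 θ2 θ0s θ1s θ2s φ q : F) :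
    splitMatrix θ0 θ1 θ2 (q - (θ1 - θ2) * (θ1s - θ2s)) *
        transitionMatrix θ0 θ1 θ2 θ0s θ1s θ2s φ q =
      transitionMatrix θ0 θ1 θ2 θ0s θ1s θ2s φ q *
        splitMatrix θ2 θ1 θ0 (q - (θ0 - θ1) * (θ0s - θ1s)) := by
  ext i j
  fin_cases i <;> fin_cases j <;>
    simp [splitMatrix, transitionMatrix, Matrix.mul_apply, Fin.sum_univ_four] <;> ring

end TridiagonalSystem

theorem stmt16_general (F : Type*) [Field F]
    (θ0 θ1 θ2 θ0s θ1s θ2s φ ϕ : F)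
    (h02 : θ0 ≠ θ2)
    (h02s : θ0s ≠ θ2s)
    (hφ : φ ≠ 0) (hϕ : ϕ ≠ 0)
    (φ₁ φ₂ : F)
    (hφ₁ : φ₁ = (ϕ - φ) / ((θ0 - θ2) * (θ0s - θ2s)) - (θ0 - θ1) * (θ0s - θ1s))
    (hφ₂ : φ₂ = (ϕ - φ) / ((θ0 - θ2) * (θ0s - θ2s)) - (θ1 - θ2) * (θ1s - θ2s))
    (B T : Matrix (Fin 4) (Fin 4) F)
    (hB : B = !![θ0, 0, 0, 0; 1, θ1, 0, 0; 0, 0, θ1, 0; 0, 1, φ₂, θ2])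
    (hT : T = !![φ, (θ0 - θ2) * φ, (θ0 - θ2) * φ * φ₁, (θ0 - θ2) * (θ0 - θ1) * φ;
                 0, φ, (θ0 - θ2) * (θ1s - θ0s) * φ, (θ0 - θ2) * φ;
                 θ2s - θ0s, (θ2s - θ0s) * (θ1 - θ2), φ, 0;
                 (θ2s - θ0s) * (θ2s - θ1s), (θ2s - θ0s) * φ₂, (θ2s - θ0s) * φ, φ]) :
    IsUnit T ∧
      T⁻¹ * B * T = !![θ2, 0, 0, 0; 1, θ1, 0, 0; 0, 0, θ1, 0; 0, 1, φ₁, θ0] := by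
  set q := (ϕ - φ) / ((θ0 - θ2) * (θ0s - θ2s)) with hq
  have hϕq : φ + (θ0 - θ2) * (θ0s - θ2s) * q = ϕ := by
    rw [hq, mul_div_cancel₀ _ (mul_ne_zero (sub_ne_zero.2 h02) (sub_ne_zero.2 h02s))]
    ring
  subst hφ₁ hφ₂ hB hT
  have hdet : IsUnit (TridiagonalSystem.transitionMatrix θ0 θ1 θ2 θ0s θ1s θ2s φ q).det := by
    rw [TridiagonalSystem.det_transitionMatrix, hϕq]
    exact (mul_ne_zero (pow_ne_zero 2 hφ) (pow_ne_zero 2 hϕ)).isUnit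
  exact ⟨(Matrix.isUnit_iff_isUnit_det _).2 hdet,
    Matrix.inv_mul_mul_eq_of_mul_eq hdet (TridiagonalSystem.splitMatrix_mul_transitionMatrix ..)⟩

theorem stmt16 (F : Type*) [Field F]
    (θ0 θ1 θ2 θ0s θ1s θ2s φ ϕ : F)
    (h01 : θ0 ≠ θ1) (h02 : θ0 ≠ θ2) (h12 : θ1 ≠ θ2)
    (h01s : θ0s ≠ θ1s) (h02s : θ0s ≠ θ2s) (h12s : θ1s ≠ θ2s)
    (hφ : φ ≠ 0) (hϕ : ϕ ≠ 0)
    (φ₁ φ₂ ϕ₁ ϕ₂ : F)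
    (hφ₁ : φ₁ = (ϕ - φ) / ((θ0 - θ2) * (θ0s - θ2s)) - (θ0 - θ1) * (θ0s - θ1s))
    (hφ₂ : φ₂ = (ϕ - φ) / ((θ0 - θ2) * (θ0s - θ2s)) - (θ1 - θ2) * (θ1s - θ2s))
    (hϕ₁ : ϕ₁ = (φ - ϕ) / ((θ2 - θ0) * (θ0s - θ2s)) - (θ2 - θ1) * (θ0s - θ1s))
    (hϕ₂ : ϕ₂ = (φ - ϕ) / ((θ2 - θ0) * (θ0s - θ2s)) - (θ1 - θ0) * (θ1s - θ2s))
    (B T : Matrix (Fin 4) (Fin 4) F)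
    (hB : B = !![θ0, 0, 0, 0; 1, θ1, 0, 0; 0, 0, θ1, 0; 0, 1, φ₂, θ2])
    (hT : T = !![φ, (θ0 - θ2) * φ, (θ0 - θ2) * φ * φ₁, (θ0 - θ2) * (θ0 - θ1) * φ;
                 0, φ, (θ0 - θ2) * (θ1s - θ0s) * φ, (θ0 - θ2) * φ;
                 θ2s - θ0s, (θ2s - θ0s) * (θ1 - θ2), φ, 0;
                 (θ2s - θ0s) * (θ2s - θ1s), (θ2s - θ0s) * φ₂, (θ2s - θ0s) * φ, φ]) :
    IsUnit T ∧
      T⁻¹ * B * T = !![θ2, 0, 0, 0; 1, θ1, 0, 0; 0, 0, θ1, 0; 0, 1, φ₁, θ0] :=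
  stmt16_general F θ0 θ1 θ2 θ0s θ1s θ2s φ ϕ h02 h02s hφ hϕ φ₁ φ₂ hφ₁ hφ₂ B T hB hT
end

section
/- Let F be a field and θ0,θ1,θ2,θ0*,θ1*,θ2*,φ,ϕ ∈ F with θ0,θ1,θ2 pairwise distinct, θ0*,θ1*,θ2* pairwise distinct, φ ≠ 0 and ϕ ≠ 0, and let φ₁ = (ϕ-φ)/((θ0-θ2)(θ0*-θ2*)) - (θ0-θ1)(θ0*-θ1*), φ₂ = (ϕ-φ)/((θ0-θ2)(θ0*-θ2*)) - (θ1-θ2)(θ1*-θ2*) and ϕ₂ = (φ-ϕ)/((θ2-θ0)(θ0*-θ2*)) - (θ1-θ0)(θ1*-θ2*). Let B (representing A) be the 4×4 matrix with rows (θ0,0,0,0),(1,θ1,0,0),(0,0,θ1,0),(0,1,φ₂,θ2), and let S be the 4×4 matrix with rows (1, (ϕ + ϕ₂(θ0-θ2)(θ1*-θ0*))/((θ1*-θ0*)(θ1*-θ2*)), φ/((θ1*-θ0*)(θ1*-θ2*)), φ), (0, θ0-θ2, 0, 0), (0, (θ1*-θ2*)⁻¹, (θ1*-θ2*)⁻¹,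 θ2*-θ0*), (0, 0, 0, (θ2*-θ0*)(θ2*-θ1*)). If S is invertible, then the (0,0) entry of S⁻¹·B·S equals θ0 + φ₁/(θ0*-θ1*). -/
set_option maxHeartbeats 2000000 in
private lemma stmt17_key (F : Type*) [Field F] (θ0 θ1 θ2 θ0s θ1s θ2s φ ϕ : F)
    (hd : θ0 - θ2 ≠ 0) (hd' : θ2 - θ0 ≠ 0) (h12s' : θ1s - θ2s ≠ 0) (h10s : θ1s - θ0s ≠ 0)
    (h01s' : θ0s - θ1s ≠ 0) (h02s' : θ0s - θ2s ≠ 0) :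
    (φ / ((θ1s - θ0s) * (θ1s - θ2s)) -
      (ϕ + ((φ - ϕ) / ((θ2 - θ0) * (θ0s - θ2s)) - (θ1 - θ0) * (θ1s - θ2s)) * (θ0 - θ2) * (θ1s - θ0s)) /
        ((θ1s - θ0s) * (θ1s - θ2s))) / (θ0 - θ2)
    = ((ϕ - φ) / ((θ0 - θ2) * (θ0s - θ2s)) - (θ0 - θ1) * (θ0s - θ1s)) / (θ0s - θ1s) := by
  field_simp
  try rw [div_eq_iff (by simp [mul_ne_zero_iff, hd, hd', h12s', h10s, h02s'])]
  ring

set_option maxHeartbeats 1000000 in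
theorem stmt17 (F : Type*) [Field F]
    (θ0 θ1 θ2 θ0s θ1s θ2s φ ϕ : F)
    (h01 : θ0 ≠ θ1) (h02 : θ0 ≠ θ2) (h12 : θ1 ≠ θ2)
    (h01s : θ0s ≠ θ1s) (h02s : θ0s ≠ θ2s) (h12s : θ1s ≠ θ2s)
    (hφ : φ ≠ 0) (hϕ : ϕ ≠ 0)
    (φ₁ φ₂ ϕ₂ : F)
    (hφ₁ : φ₁ = (ϕ - φ) / ((θ0 - θ2) * (θ0s - θ2s)) - (θ0 - θ1) * (θ0s - θ1s))
    (hφ₂ : φ₂ = (ϕ - φ) / ((θ0 - θ2) * (θ0s - θ2s)) - (θ1 - θ2) * (θ1s - θ2s))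
    (hϕ₂ : ϕ₂ = (φ - ϕ) / ((θ2 - θ0) * (θ0s - θ2s)) - (θ1 - θ0) * (θ1s - θ2s))
    (B S : Matrix (Fin 4) (Fin 4) F)
    (hB : B = !![θ0, 0, 0, 0; 1, θ1, 0, 0; 0, 0, θ1, 0; 0, 1, φ₂, θ2])
    (hS : S = !![1, (ϕ + ϕ₂ * (θ0 - θ2) * (θ1s - θ0s)) / ((θ1s - θ0s) * (θ1s - θ2s)),
                   φ / ((θ1s - θ0s) * (θ1s - θ2s)), φ;
                 0, θ0 - θ2, 0, 0;
                 0, (θ1s - θ2s)⁻¹, (θ1s - θ2s)⁻¹, θ2s - θ0s;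
                 0, 0, 0, (θ2s - θ0s) * (θ2s - θ1s)])
    (hSu : IsUnit S) :
    (S⁻¹ * B * S) 0 0 = θ0 + φ₁ / (θ0s - θ1s) := by
  have hd : θ0 - θ2 ≠ 0 := sub_ne_zero.mpr h02
  have hd' : θ2 - θ0 ≠ 0 := sub_ne_zero.mpr (Ne.symm h02)
  have h12s' : θ1s - θ2s ≠ 0 := sub_ne_zero.mpr h12s
  have h10s : θ1s - θ0s ≠ 0 := sub_ne_zero.mpr (Ne.symm h01s)
  have h20s : θ2s - θ0s ≠ 0 := sub_ne_zero.mpr (Ne.symm h02s)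
  have h21s : θ2s - θ1s ≠ 0 := sub_ne_zero.mpr (Ne.symm h12s)
  have h01s' : θ0s - θ1s ≠ 0 := sub_ne_zero.mpr h01s
  have h02s' : θ0s - θ2s ≠ 0 := sub_ne_zero.mpr h02s
  set a : F := (ϕ + ϕ₂ * (θ0 - θ2) * (θ1s - θ0s)) / ((θ1s - θ0s) * (θ1s - θ2s)) with ha
  set b : F := φ / ((θ1s - θ0s) * (θ1s - θ2s)) with hb
  set g : F := (θ2s - θ0s) * (θ2s - θ1s) with hg
  have hgne : g ≠ 0 := mul_ne_zero h20s h21s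
  set T : Matrix (Fin 4) (Fin 4) F :=
    !![1, (b - a) / (θ0 - θ2), -b * (θ1s - θ2s), (b * (θ2s - θ0s) * (θ1s - θ2s) - φ) / g;
       0, (θ0 - θ2)⁻¹, 0, 0;
       0, -(θ0 - θ2)⁻¹, θ1s - θ2s, -((θ2s - θ0s) * (θ1s - θ2s)) / g;
       0, 0, 0, g⁻¹] with hT
  have hTS : T * S = 1 := by
    subst hS
    ext i j
    fin_cases i <;> fin_cases j <;>
      · simp [hT, Matrix.mul_apply, Fin.sum_univ_four, Matrix.vecHead, Matrix.vecTail,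
          Matrix.one_apply, Fin.ext_iff]
        try rw [if_neg (by decide)]
        try field_simp
        try ring
  have hSinv : S⁻¹ = T := by
    rw [Matrix.inv_eq_left_inv hTS]
  rw [hSinv]
  subst hB hS
  simp [hT, Matrix.mul_apply, Fin.sum_univ_four, Matrix.vecHead, Matrix.vecTail]
  rw [ha, hb, hφ₁, hϕ₂]
  exact stmt17_key F θ0 θ1 θ2 θ0s θ1s θ2s φ ϕ hd hd' h12s' h10s h01s' h02s'
end
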